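/- Let S ⊆ ℤ^r be finite and nonempty, a_s ∈ K[n]\{0} for s ∈ S, and f ∈ K[n]. If there is a corner point p of S whose coefficient a_p has no aperiodic irreducible factor (i.e., the aperiodic part of a_p is a constant), then the aperiodic part of the denominator (in lowest terms) of any rational solution y ∈ K(n) of the PLDE ∑_{s∈S} a_s N^s y = f is 1 (a unit). -/

import Mathlib

/-!
Write the solution as `y = P / B` in lowest terms with `B = u * q`, and suppose the aperiodic part
`q` has an irreducible factor `d`. Its spread against `B` is finite, so some `i` in it is extremal for the direction `v` exhibiting the
corner `p`, and then `N^(p - i) d` divides `N^p B` but no other `N^w B`, `w ∈ S`. Clearing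
denominators, every term of the equation except the `p`-th is divisible by `N^(p - i) d`, hence
it divides `a p * N^p P`, and by coprimality of `P` and `B` it divides `a p`. Since `a p` is a
periodic polynomial times a nonzero constant, `N^(p - i) d`, and with it `d`, would be periodic.
-/

open MvPolynomial

/-- The substitution homomorphism `n_j ↦ n_j + i_j` on `K[n₁,…,n_r]`. -/
noncomputable def mShiftHom (K : Type*) [Field K] {r : ℕ} (i : Fin r → ℤ) :
    MvPolynomial (Fin r) K →ₐ[K] MvPolynomial (Fin r) K :=
  aeval (fun j => X j + C (i j : K))

/-- The shift automorphism `N^i` of `K[n₁,…,n_r]`, determined by `n_j ↦ n_j + i_j`. -/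
noncomputable def mShift (K : Type*) [Field K] {r : ℕ} (i : Fin r → ℤ) :
    MvPolynomial (Fin r) K ≃ₐ[K] MvPolynomial (Fin r) K :=
  AlgEquiv.ofAlgHom (mShiftHom K i) (mShiftHom K (-i))
    (by apply MvPolynomial.algHom_ext; intro j; simp [mShiftHom])
    (by apply MvPolynomial.algHom_ext; intro j; simp [mShiftHom])

/-- `Spread(p,q) = { i ∈ ℤ^r : gcd(p, N^i q) ≠ 1 }`, where `gcd ≠ 1` (not a unit)
is expressed as `¬ IsRelPrime`. -/
def mSpread {K : Type*} [Field K] {r : ℕ} (p q : MvPolynomial (Fin r) K) :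
    Set (Fin r → ℤ) :=
  {i | ¬ IsRelPrime p (mShift K i q)}

/-- The canonical embedding of `K[n₁,…,n_r]` into its fraction field `K(n₁,…,n_r)`. -/
noncomputable def toFrac (K : Type*) [Field K] {r : ℕ} :
    MvPolynomial (Fin r) K →+* FractionRing (MvPolynomial (Fin r) K) :=
  algebraMap _ _

/-- The shift automorphism `N^i` extended to the fraction field `K(n₁,…,n_r)`. -/
noncomputable def fShift (K : Type*) [Field K] {r : ℕ} (i : Fin r → ℤ) :
    FractionRing (MvPolynomial (Fin r) K) ≃+* FractionRing (MvPolynomial (Fin r) K) :=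
  IsFractionRing.ringEquivOfRingEquiv (mShift K i).toRingEquiv

lemma isRelPrime_map_iff {M N F : Type*} [Monoid M] [Monoid N] [EquivLike F M N]
    [MulEquivClass F M N] (f : F) {a b : M} :
    IsRelPrime (f a) (f b) ↔ IsRelPrime a b := by
  refine ⟨IsRelPrime.of_map f, fun h c hca hcb => ?_⟩
  obtain ⟨c, rfl⟩ := EquivLike.surjective f c
  rw [map_dvd_iff] at hca hcb
  exact (h hca hcb).map f

lemma Prime.dvd_of_sum_mul_prod_erase_eq {ι R : Type*} [CommRing R] [DecidableEq ι]
    {S : Finset ι} {A D : ι → R} {F π : R} {p : ι} (hπ : Prime π) (hp : p ∈ S)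
    (hπp : π ∣ D p) (hπD : ∀ w ∈ S, w ≠ p → ¬ π ∣ D w)
    (h : ∑ w ∈ S, A w * ∏ w' ∈ S.erase w, D w' = F * ∏ w ∈ S, D w) :
    π ∣ A p := by
  have htotal : π ∣ ∑ w ∈ S, A w * ∏ w' ∈ S.erase w, D w' :=
    h ▸ (hπp.trans (Finset.dvd_prod_of_mem D hp)).mul_left F
  have hrest : π ∣ ∑ w ∈ S.erase p, A w * ∏ w' ∈ S.erase w, D w' :=
    Finset.dvd_sum fun w hw => (hπp.trans (Finset.dvd_prod_of_mem D
      (Finset.mem_erase.mpr ⟨(Finset.ne_of_mem_erase hw).symm, hp⟩))).mul_left _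
  rw [← Finset.add_sum_erase S _ hp, dvd_add_left hrest] at htotal
  rcases hπ.dvd_mul.mp htotal with hA | hprod
  · exact hA
  · obtain ⟨w, hw, hπw⟩ := (hπ.dvd_finsetProd_iff _).mp hprod
    exact absurd hπw (hπD w (Finset.mem_of_mem_erase hw) (Finset.ne_of_mem_erase hw))

lemma Finset.sum_mul_prod_erase_eq_of_sum_div_eq {ι F : Type*} [Field F] [DecidableEq ι]
    {S : Finset ι} {A D : ι → F} {c : F} (hD : ∀ w ∈ S, D w ≠ 0)
    (h : ∑ w ∈ S, A w / D w = c) :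
    ∑ w ∈ S, A w * ∏ w' ∈ S.erase w, D w' = c * ∏ w ∈ S, D w := by
  rw [← h, Finset.sum_mul]
  refine Finset.sum_congr rfl fun w hw => ?_
  rw [← Finset.mul_prod_erase S D hw]
  field_simp [hD w hw]

lemma Set.Finite.exists_forall_add_notMem {r : ℕ} {T : Set (Fin r → ℤ)} (hT : T.Finite)
    (hne : T.Nonempty) (v : Fin r → ℝ) :
    ∃ i ∈ T, ∀ j, 0 < ∑ l, v l * (j l : ℝ) → i + j ∉ T := by
  obtain ⟨i, hi, hmax⟩ := Set.exists_max_image T (fun i => ∑ l, v l * (i l : ℝ)) hT hne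
  refine ⟨i, hi, fun j hj hij => ?_⟩
  have := hmax (i + j) hij
  simp only [Pi.add_apply, Int.cast_add, mul_add, Finset.sum_add_distrib] at this
  linarith

section Shift

variable {K : Type*} [Field K] {r : ℕ}

lemma mShift_add (i j : Fin r → ℤ) (x : MvPolynomial (Fin r) K) :
    mShift K i (mShift K j x) = mShift K (i + j) x := by
  change ((mShiftHom K i).comp (mShiftHom K j)) x = mShiftHom K (i + j) x
  congr 1
  refine MvPolynomial.algHom_ext fun l => ?_
  simp only [mShiftHom, AlgHom.comp_apply, aeval_X, map_add, aeval_C, Pi.add_apply,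
    Int.cast_add, algebraMap_eq]
  ring

lemma mShift_zero (x : MvPolynomial (Fin r) K) : mShift K 0 x = x := by
  change mShiftHom K 0 x = AlgHom.id K _ x
  congr 1
  refine MvPolynomial.algHom_ext fun l => ?_
  simp [mShiftHom]

lemma mShift_dvd_iff {i : Fin r → ℤ} {x y : MvPolynomial (Fin r) K} :
    mShift K i x ∣ y ↔ x ∣ mShift K (-i) y := by
  rw [← map_dvd_iff (mShift K i) (b := mShift K (-i) y), mShift_add, add_neg_cancel,
    mShift_zero]

lemma mem_mSpread_iff {d x : MvPolynomial (Fin r) K} (hd : Irreducible d) {i : Fin r → ℤ} :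
    i ∈ mSpread d x ↔ d ∣ mShift K i x := by
  rw [mSpread, Set.mem_ofPred_eq, hd.isRelPrime_iff_not_dvd, not_not]

lemma mSpread_mShift_self (j : Fin r → ℤ) (d : MvPolynomial (Fin r) K) :
    mSpread (mShift K j d) (mShift K j d) = mSpread d d := by
  ext i
  simp only [mSpread, Set.mem_ofPred_eq]
  rw [mShift_add, add_comm, ← mShift_add, isRelPrime_map_iff]

lemma mSpread_finite_of_irreducible {d e : MvPolynomial (Fin r) K} (hd : Irreducible d)
    (hfin : (mSpread d d).Finite) (he : Irreducible e) : (mSpread d e).Finite := by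
  rcases (mSpread d e).eq_empty_or_nonempty with hempty | ⟨i₀, hi₀⟩
  · simp [hempty]
  rw [mem_mSpread_iff hd] at hi₀
  have hassoc : Associated (mShift K i₀ e) d :=
    (hd.associated_of_dvd ((MulEquiv.irreducible_iff _).mpr he) hi₀).symm
  refine (hfin.image (· + i₀)).subset fun i hi => ⟨i - i₀, ?_, sub_add_cancel i i₀⟩
  rw [mem_mSpread_iff hd] at hi ⊢
  rwa [← (hassoc.map (mShift K (i - i₀))).dvd_iff_dvd_right, mShift_add, sub_add_cancel]

lemma mSpread_finite {d b : MvPolynomial (Fin r) K} (hd : Irreducible d)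
    (hfin : (mSpread d d).Finite) (hb : b ≠ 0) : (mSpread d b).Finite := by
  induction b using UniqueFactorizationMonoid.induction_on_prime with
  | h₁ => exact absurd rfl hb
  | h₂ u hu =>
    refine Set.finite_empty.subset fun i hi => ?_
    rw [mem_mSpread_iff hd] at hi
    exact hd.not_isUnit (isUnit_of_dvd_unit hi (hu.map (mShift K i)))
  | h₃ b e hb' he ih =>
    refine ((mSpread_finite_of_irreducible hd hfin he.irreducible).union
      (ih (right_ne_zero_of_mul hb))).subset fun i hi => ?_
    rw [Set.mem_union, mem_mSpread_iff hd, mem_mSpread_iff hd]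
    rw [mem_mSpread_iff hd, map_mul] at hi
    exact hd.prime.dvd_or_dvd hi

end Shift

section PLDE

variable {K : Type*} [Field K] {r : ℕ} {S : Finset (Fin r → ℤ)}
  {a : (Fin r → ℤ) → MvPolynomial (Fin r) K} {f P B : MvPolynomial (Fin r) K}
  {y : FractionRing (MvPolynomial (Fin r) K)}

lemma fShift_toFrac (i : Fin r → ℤ) (x : MvPolynomial (Fin r) K) :
    fShift K i (toFrac K x) = toFrac K (mShift K i x) :=
  IsFractionRing.ringEquivOfRingEquiv_algebraMap (mShift K i).toRingEquiv x

lemma sum_mul_prod_erase_mShift_eq_of_solution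
    (hsol : ∑ w ∈ S, toFrac K (a w) * fShift K w y = toFrac K f) (hB : B ≠ 0)
    (hy : y = toFrac K P / toFrac K B) :
    ∑ w ∈ S, a w * mShift K w P * ∏ w' ∈ S.erase w, mShift K w' B
      = f * ∏ w ∈ S, mShift K w B := by
  have hinj : Function.Injective (toFrac K (r := r)) := IsFractionRing.injective _ _
  apply hinj
  simp only [map_sum, map_mul, map_prod]
  refine Finset.sum_mul_prod_erase_eq_of_sum_div_eq
    (fun w _ => (map_ne_zero_iff _ hinj).mpr ((map_ne_zero_iff _ (mShift K w).injective).mpr hB))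
    (hsol ▸ Finset.sum_congr rfl fun w _ => ?_)
  rw [hy, map_div₀, fShift_toFrac, fShift_toFrac, mul_div_assoc]

theorem exists_mShift_dvd_coeff_of_corner {p : Fin r → ℤ} {v : Fin r → ℝ}
    {d : MvPolynomial (Fin r) K}
    (hsol : ∑ w ∈ S, toFrac K (a w) * fShift K w y = toFrac K f) (hB : B ≠ 0)
    (hy : y = toFrac K P / toFrac K B) (hrel : IsRelPrime P B) (hp : p ∈ S)
    (hcorner : ∀ w ∈ S, w ≠ p → 0 < ∑ l, v l * ((w l - p l : ℤ) : ℝ))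
    (hd : Irreducible d) (hfin : (mSpread d d).Finite) (hdB : d ∣ B) :
    ∃ i, mShift K i d ∣ a p := by
  obtain ⟨i, hi, hext⟩ := (mSpread_finite hd hfin hB).exists_forall_add_notMem
    ⟨0, (mem_mSpread_iff hd).mpr (by rwa [mShift_zero])⟩ v
  have hπ : Prime (mShift K (p - i) d) := ((MulEquiv.irreducible_iff _).mpr hd).prime
  have hπ_dvd_shift_iff (w : Fin r → ℤ) :
      mShift K (p - i) d ∣ mShift K w B ↔ i + (w - p) ∈ mSpread d B := by
    rw [mShift_dvd_iff, mShift_add, mem_mSpread_iff hd, neg_sub, sub_add_eq_add_sub,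
      add_sub_assoc]
  have hπB : mShift K (p - i) d ∣ mShift K p B :=
    (hπ_dvd_shift_iff p).mpr (by rwa [sub_self, add_zero])
  rcases hπ.dvd_mul.mp (hπ.dvd_of_sum_mul_prod_erase_eq (D := fun w => mShift K w B) hp hπB
    (fun w hw hwp => (hπ_dvd_shift_iff w).not.mpr (hext _ (hcorner w hw hwp)))
    (sum_mul_prod_erase_mShift_eq_of_solution hsol hB hy)) with ha | hπP
  · exact ⟨_, ha⟩
  · exact absurd (((isRelPrime_map_iff (mShift K p)).mpr hrel) hπP hπB) hπ.not_isUnit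

end PLDE

theorem aperiodic_denominator_trivial_of_constant_aperiodic_part_general
    {K : Type*} [Field K] {r : ℕ}
    (S : Finset (Fin r → ℤ))
    (a : (Fin r → ℤ) → MvPolynomial (Fin r) K) (ha : ∀ w ∈ S, a w ≠ 0)
    (f : MvPolynomial (Fin r) K)
    (p : Fin r → ℤ) (hp : p ∈ S)
    (hcorner : ∃ v : Fin r → ℝ, v ≠ 0 ∧
      ∀ w ∈ S, w ≠ p → 0 < ∑ l, v l * ((w l - p l : ℤ) : ℝ))
    (up' ap' : MvPolynomial (Fin r) K)
    (hfact : a p = up' * ap')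
    (hup' : ∀ d, Irreducible d → d ∣ up' → (mSpread d d).Infinite)
    (hconst : ∃ c : K, ap' = C c) :
    ∀ (y : FractionRing (MvPolynomial (Fin r) K))
      (pnum u q : MvPolynomial (Fin r) K),
      (∑ w ∈ S, toFrac K (a w) * fShift K w y = toFrac K f) →
      u * q ≠ 0 →
      y = toFrac K pnum / toFrac K (u * q) →
      IsRelPrime pnum (u * q) →
      (∀ d, Irreducible d → d ∣ u → (mSpread d d).Infinite) →
      (∀ d, Irreducible d → d ∣ q → (mSpread d d).Finite) →
      IsUnit q := by
  intro y pnum u q hsol hne hy hrel _ hq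
  by_contra hq_nonunit
  obtain ⟨d, hd, hdq⟩ :=
    WfDvdMonoid.exists_irreducible_factor hq_nonunit (right_ne_zero_of_mul hne)
  obtain ⟨v, -, hv⟩ := hcorner
  obtain ⟨i, hi⟩ := exists_mShift_dvd_coeff_of_corner hsol hne hy hrel hp hv hd (hq d hd hdq)
    (hdq.trans (dvd_mul_left q u))
  obtain ⟨c, rfl⟩ := hconst
  have hc : IsUnit (C c : MvPolynomial (Fin r) K) := by
    refine (Ne.isUnit fun hc => ha p hp ?_).map C
    rw [hfact, hc, map_zero, mul_zero]
  rw [hfact, hc.dvd_mul_right] at hi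
  have hperiodic := hup' _ ((MulEquiv.irreducible_iff _).mpr hd) hi
  rw [mSpread_mShift_self] at hperiodic
  exact hperiodic (hq d hd hdq)

/-- **Corollary.**  If there is a corner point `p` of `S` whose coefficient `a_p` has no
aperiodic irreducible factor (i.e. the aperiodic part `a'_p` of `a_p` is a constant),
then the aperiodic part of the denominator (in lowest terms) of any rational solution
of the PLDE is `1` (a unit). -/
theorem aperiodic_denominator_trivial_of_constant_aperiodic_part
    {K : Type*} [Field K] [CharZero K] {r : ℕ}
    (S : Finset (Fin r → ℤ)) (hS : S.Nonempty)
    (a : (Fin r → ℤ) → MvPolynomial (Fin r) K) (ha : ∀ w ∈ S, a w ≠ 0)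
    (f : MvPolynomial (Fin r) K)
    (p : Fin r → ℤ) (hp : p ∈ S)
    (hcorner : ∃ v : Fin r → ℝ, v ≠ 0 ∧
      ∀ w ∈ S, w ≠ p → 0 < ∑ l, v l * ((w l - p l : ℤ) : ℝ))
    (up' ap' : MvPolynomial (Fin r) K)
    (hfact : a p = up' * ap')
    (hup' : ∀ d, Irreducible d → d ∣ up' → (mSpread d d).Infinite)
    (hap' : ∀ d, Irreducible d → d ∣ ap' → (mSpread d d).Finite)
    (hconst : ∃ c : K, ap' = C c) :
    ∀ (y : FractionRing (MvPolynomial (Fin r) K))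
      (pnum u q : MvPolynomial (Fin r) K),
      (∑ w ∈ S, toFrac K (a w) * fShift K w y = toFrac K f) →
      u * q ≠ 0 →
      y = toFrac K pnum / toFrac K (u * q) →
      IsRelPrime pnum (u * q) →
      (∀ d, Irreducible d → d ∣ u → (mSpread d d).Infinite) →
      (∀ d, Irreducible d → d ∣ q → (mSpread d d).Finite) →
      IsUnit q :=
  aperiodic_denominator_trivial_of_constant_aperiodic_part_general S a ha f p hp hcorner up' ap'
    hfact hup' hconst
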